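/- arXiv:1911.09942 — 6 statements merged into one kernel-verified Lean document; each statement's English description precedes it below -/
import Mathlib

section
/- Let (L,[·,·]') be a Lie algebra over a field K and let α, β : L → L be two commuting bijective linear maps which are both Lie algebra automorphisms of (L,[·,·]') (i.e., α[x,y]' = [α(x),α(y)]' and β[x,y]' = [β(x),β(y)]' for all x,y ∈ L). Define the bilinear map [·,·] : L × L → L by [x,y] = [α(x),β(y)]'. Then (L,[·,·],α,β) is a regular BiHom-Lie algebra; that is, α∘β = β∘α, α and β are multiplicative for [·,·], [β(x),α(y)] = -[β(y),α(x)] for all x,y, the BiHom-Jacobi identity [β²(x),[β(y),α(z)]] + [β²(y),[β(z),α(x)]] + [β²(z),[β(x),α(y)]] = 0 holds for all x,y,z, and α, β are bijective. -/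
/-!
Every identity reduces to the corresponding one for the original bracket: the
multiplicativity of `α` and `β` and the commutation `α ∘ β = β ∘ α` move all twists
onto the arguments, after which skew-symmetry is `lie_skew` and each term of the
BiHom-Jacobi sum is an ordinary Jacobi term evaluated at `α (β (β x))`, `α (β (β y))`,
`α (β (β z))`.
-/

namespace YauTwist

variable {L : Type*} [LieRing L] {α β : L → L}

theorem map_twist_lie_left (hcomm : ∀ x, α (β x) = β (α x))
    (hαaut : ∀ x y, α ⁅x, y⁆ = ⁅α x, α y⁆) (x y : L) :
    α ⁅α x, β y⁆ = ⁅α (α x), β (α y)⁆ := by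
  rw [hαaut, hcomm]

theorem map_twist_lie_right (hcomm : ∀ x, α (β x) = β (α x))
    (hβaut : ∀ x y, β ⁅x, y⁆ = ⁅β x, β y⁆) (x y : L) :
    β ⁅α x, β y⁆ = ⁅α (β x), β (β y)⁆ := by
  rw [hβaut, hcomm]

theorem twist_lie_skew (hcomm : ∀ x, α (β x) = β (α x)) (x y : L) :
    ⁅α (β x), β (α y)⁆ = -⁅α (β y), β (α x)⁆ := by
  rw [hcomm y, ← hcomm x, ← lie_skew]

theorem map_twist_lie_eq_lie (hcomm : ∀ x, α (β x) = β (α x))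
    (hβaut : ∀ x y, β ⁅x, y⁆ = ⁅β x, β y⁆) (x y : L) :
    β ⁅α (β x), β (α y)⁆ = ⁅α (β (β x)), α (β (β y))⁆ := by
  simp only [hβaut, ← hcomm]

theorem twist_lie_jacobi (hcomm : ∀ x, α (β x) = β (α x))
    (hβaut : ∀ x y, β ⁅x, y⁆ = ⁅β x, β y⁆) (x y z : L) :
    ⁅α (β (β x)), β ⁅α (β y), β (α z)⁆⁆ + ⁅α (β (β y)), β ⁅α (β z), β (α x)⁆⁆
      + ⁅α (β (β z)), β ⁅α (β x), β (α y)⁆⁆ = 0 := by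
  simp only [map_twist_lie_eq_lie hcomm hβaut]
  exact lie_jacobi _ _ _

end YauTwist

/-- If `(L, [·,·]')` is a Lie algebra and `α, β` are commuting
bijective Lie algebra automorphisms, then `(L, [x,y] := [α x, β y]', α, β)` is a
regular BiHom-Lie algebra. -/
theorem yau_twist_is_regular_biHomLie {K L : Type*} [Field K] [LieRing L] [LieAlgebra K L]
    (α β : L →ₗ[K] L)
    (hα : Function.Bijective α) (hβ : Function.Bijective β)
    (hcomm : ∀ x : L, α (β x) = β (α x))
    (hαaut : ∀ x y : L, α ⁅x, y⁆ = ⁅α x, α y⁆)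
    (hβaut : ∀ x y : L, β ⁅x, y⁆ = ⁅β x, β y⁆) :
    (∀ x : L, α (β x) = β (α x)) ∧
    (∀ x y : L, α ⁅α x, β y⁆ = ⁅α (α x), β (α y)⁆) ∧
    (∀ x y : L, β ⁅α x, β y⁆ = ⁅α (β x), β (β y)⁆) ∧
    (∀ x y : L, ⁅α (β x), β (α y)⁆ = - ⁅α (β y), β (α x)⁆) ∧
    (∀ x y z : L,
      ⁅α (β (β x)), β ⁅α (β y), β (α z)⁆⁆ + ⁅α (β (β y)), β ⁅α (β z), β (α x)⁆⁆
        + ⁅α (β (β z)), β ⁅α (β x), β (α y)⁆⁆ = 0) ∧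
    Function.Bijective α ∧ Function.Bijective β :=
  ⟨hcomm, YauTwist.map_twist_lie_left hcomm hαaut, YauTwist.map_twist_lie_right hcomm hβaut,
    YauTwist.twist_lie_skew hcomm, YauTwist.twist_lie_jacobi hcomm hβaut, hα, hβ⟩
end

section
/- Let (L,[·,·],α,β) be a regular BiHom-Lie algebra over a field K, and define the bilinear map [·,·]' : L × L → L by [x,y]' = [α⁻¹(x),β⁻¹(y)] for all x,y ∈ L. Then (L,[·,·]') is a Lie algebra, i.e., [·,·]' is skew-symmetric ([x,y]' = -[y,x]') and satisfies the Jacobi identity [x,[y,z]']' + [y,[z,x]']' + [z,[x,y]']' = 0 for all x,y,z ∈ L. -/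
/-- The induced bracket `[x,y]' = [α⁻¹ x, β⁻¹ y]` of a regular BiHom-Lie algebra. -/
def inducedBracket {K L : Type*} [Field K] [AddCommGroup L] [Module K L]
    (br : L →ₗ[K] L →ₗ[K] L) (α β : L ≃ₗ[K] L) (x y : L) : L :=
  br (α.symm x) (β.symm y)

/-! Substituting `x ↦ β⁻¹ α⁻¹ x` turns `[β x, α y]` into `[x, y]'`, so BiHom-skew-symmetry is
skew-symmetry of `[·,·]'`. Likewise the BiHom-Jacobi identity at `β⁻² α⁻¹ x`, `β⁻² α⁻¹ y`,
`β⁻² α⁻¹ z` is the Jacobi identity of `[·,·]'`, once `β⁻¹` is pushed through the bracket and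
past `α⁻¹`. -/

section

variable {R M : Type*} [Semiring R] [AddCommMonoid M] [Module R M]

theorem LinearEquiv.apply_symm_apply_comm {α β : M ≃ₗ[R] M} (h : ∀ x, α (β x) = β (α x))
    (x : M) : β (α.symm x) = α.symm (β x) :=
  α.injective <| by rw [h, α.apply_symm_apply, α.apply_symm_apply]

theorem LinearEquiv.symm_apply_symm_apply_comm {α β : M ≃ₗ[R] M} (h : ∀ x, α (β x) = β (α x))
    (x : M) : β.symm (α.symm x) = α.symm (β.symm x) :=
  LinearEquiv.apply_symm_apply_comm (LinearEquiv.apply_symm_apply_comm fun y => (h y).symm) x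

end

theorem LinearEquiv.symm_map_bracket {R M : Type*} [CommSemiring R] [AddCommMonoid M]
    [Module R M] {br : M →ₗ[R] M →ₗ[R] M} {β : M ≃ₗ[R] M}
    (h : ∀ x y, β (br x y) = br (β x) (β y)) (x y : M) :
    β.symm (br x y) = br (β.symm x) (β.symm y) :=
  β.injective <| by rw [h, β.apply_symm_apply, β.apply_symm_apply, β.apply_symm_apply]

section

variable {K L : Type*} [Field K] [AddCommGroup L] [Module K L]
  {br : L →ₗ[K] L →ₗ[K] L} {α β : L ≃ₗ[K] L}

theorem inducedBracket_skew (hcomm : ∀ x, α (β x) = β (α x))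
    (hskew : ∀ x y, br (β x) (α y) = - br (β y) (α x)) (x y : L) :
    inducedBracket br α β x y = - inducedBracket br α β y x := by
  have e := hskew (β.symm (α.symm x)) (α.symm (β.symm y))
  simpa only [inducedBracket, LinearEquiv.apply_symm_apply,
    LinearEquiv.apply_symm_apply_comm hcomm,
    LinearEquiv.apply_symm_apply_comm fun t => (hcomm t).symm] using e

theorem inducedBracket_jacobi (hcomm : ∀ x, α (β x) = β (α x))
    (hmulβ : ∀ x y, β (br x y) = br (β x) (β y))
    (hjac : ∀ x y z, br (β (β x)) (br (β y) (α z)) + br (β (β y)) (br (β z) (α x))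
        + br (β (β z)) (br (β x) (α y)) = 0) (x y z : L) :
    inducedBracket br α β x (inducedBracket br α β y z)
      + inducedBracket br α β y (inducedBracket br α β z x)
      + inducedBracket br α β z (inducedBracket br α β x y) = 0 := by
  have e := hjac (β.symm (β.symm (α.symm x))) (β.symm (β.symm (α.symm y)))
    (β.symm (β.symm (α.symm z)))
  simpa only [inducedBracket, LinearEquiv.apply_symm_apply,
    LinearEquiv.apply_symm_apply_comm hcomm,
    LinearEquiv.apply_symm_apply_comm fun t => (hcomm t).symm,
    LinearEquiv.symm_map_bracket hmulβ, LinearEquiv.symm_apply_symm_apply_comm hcomm] using e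

end

theorem induced_is_lie_general {K L : Type*} [Field K] [AddCommGroup L] [Module K L]
    (br : L →ₗ[K] L →ₗ[K] L) (α β : L ≃ₗ[K] L)
    (hcomm : ∀ x : L, α (β x) = β (α x))
    (hmulβ : ∀ x y : L, β (br x y) = br (β x) (β y))
    (hskew : ∀ x y : L, br (β x) (α y) = - br (β y) (α x))
    (hjac : ∀ x y z : L,
      br (β (β x)) (br (β y) (α z)) + br (β (β y)) (br (β z) (α x))
        + br (β (β z)) (br (β x) (α y)) = 0) :
    (∀ x y : L, inducedBracket br α β x y = - inducedBracket br α β y x) ∧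
    (∀ x y z : L,
      inducedBracket br α β x (inducedBracket br α β y z)
        + inducedBracket br α β y (inducedBracket br α β z x)
        + inducedBracket br α β z (inducedBracket br α β x y) = 0) :=
  ⟨inducedBracket_skew hcomm hskew, inducedBracket_jacobi hcomm hmulβ hjac⟩

/-- If `(L, br, α, β)` is a regular BiHom-Lie algebra, then the
induced bracket `[x,y]' = br (α⁻¹ x) (β⁻¹ y)` is skew-symmetric and satisfies the
Jacobi identity, i.e. `(L, [·,·]')` is a Lie algebra. -/
theorem induced_is_lie {K L : Type*} [Field K] [AddCommGroup L] [Module K L]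
    (br : L →ₗ[K] L →ₗ[K] L) (α β : L ≃ₗ[K] L)
    (hcomm : ∀ x : L, α (β x) = β (α x))
    (hmulα : ∀ x y : L, α (br x y) = br (α x) (α y))
    (hmulβ : ∀ x y : L, β (br x y) = br (β x) (β y))
    (hskew : ∀ x y : L, br (β x) (α y) = - br (β y) (α x))
    (hjac : ∀ x y z : L,
      br (β (β x)) (br (β y) (α z)) + br (β (β y)) (br (β z) (α x))
        + br (β (β z)) (br (β x) (α y)) = 0) :
    (∀ x y : L, inducedBracket br α β x y = - inducedBracket br α β y x) ∧
    (∀ x y z : L,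
      inducedBracket br α β x (inducedBracket br α β y z)
        + inducedBracket br α β y (inducedBracket br α β z x)
        + inducedBracket br α β z (inducedBracket br α β x y) = 0) :=
  induced_is_lie_general br α β hcomm hmulβ hskew hjac
end

section
/- Let (L,[·,·],α,β) be a finite-dimensional simple multiplicative BiHom-Lie algebra over the field ℂ of complex numbers (so α and β are bijective). Then its induced Lie algebra (L,[·,·]'), with [x,y]' = [α⁻¹(x),β⁻¹(y)], is a semisimple Lie algebra; equivalently, the maximal solvable ideal (radical) of (L,[·,·]') is zero. -/
/-- `h` is an ideal of the BiHom-Lie algebra `(L, br, α, β)`. -/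
def IsBiHomIdeal {K L : Type*} [Field K] [AddCommGroup L] [Module K L]
    (br : L →ₗ[K] L →ₗ[K] L) (α β : L →ₗ[K] L) (h : Submodule K L) : Prop :=
  (∀ x ∈ h, α x ∈ h) ∧ (∀ x ∈ h, β x ∈ h) ∧ (∀ x ∈ h, ∀ y : L, br x y ∈ h)

/-- `(L, br, α, β)` is simple: nonabelian and without proper ideals. -/
def IsSimpleBiHom {K L : Type*} [Field K] [AddCommGroup L] [Module K L]
    (br : L →ₗ[K] L →ₗ[K] L) (α β : L →ₗ[K] L) : Prop :=
  (∃ x y : L, br x y ≠ 0) ∧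
    ∀ h : Submodule K L, IsBiHomIdeal br α β h → h = ⊥ ∨ h = ⊤

/-- `I` is an ideal of `L` for the bracket `br'`. -/
def IsLieIdealFor {K L : Type*} [Field K] [AddCommGroup L] [Module K L]
    (br' : L → L → L) (I : Submodule K L) : Prop :=
  ∀ x ∈ I, ∀ y : L, br' x y ∈ I ∧ br' y x ∈ I

/-- The derived series of a submodule with respect to a bracket `br'`. -/
def derivedSeriesFor {K L : Type*} [Field K] [AddCommGroup L] [Module K L]
    (br' : L → L → L) (I : Submodule K L) : ℕ → Submodule K L
  | 0 => I
  | n + 1 => Submodule.span K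
      {z : L | ∃ x ∈ derivedSeriesFor br' I n, ∃ y ∈ derivedSeriesFor br' I n, br' x y = z}

/-- A submodule is solvable for `br'` if its derived series terminates at `⊥`. -/
def IsSolvableFor {K L : Type*} [Field K] [AddCommGroup L] [Module K L]
    (br' : L → L → L) (I : Submodule K L) : Prop :=
  ∃ n : ℕ, derivedSeriesFor br' I n = ⊥

section DerivedSeries

variable {K L : Type*} [Field K] [AddCommGroup L] [Module K L] {br' : L → L → L}

theorem derivedSeriesFor_mono {I J : Submodule K L} (h : I ≤ J) (n : ℕ) :
    derivedSeriesFor br' I n ≤ derivedSeriesFor br' J n := by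
  induction n with
  | zero => exact h
  | succ n ih =>
    refine Submodule.span_mono ?_
    rintro z ⟨x, hx, y, hy, rfl⟩
    exact ⟨x, ih hx, y, ih hy, rfl⟩

theorem derivedSeriesFor_add (I : Submodule K L) (n m : ℕ) :
    derivedSeriesFor br' I (n + m) = derivedSeriesFor br' (derivedSeriesFor br' I n) m := by
  induction m with
  | zero => rfl
  | succ m ih => rw [← add_assoc, derivedSeriesFor, ih, derivedSeriesFor]

theorem IsSolvableFor.mono {I J : Submodule K L} (h : I ≤ J) (hJ : IsSolvableFor br' J) :
    IsSolvableFor br' I :=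
  let ⟨n, hn⟩ := hJ
  ⟨n, le_bot_iff.mp (hn ▸ derivedSeriesFor_mono h n)⟩

theorem derivedSeriesFor_map {f : L ≃ₗ[K] L} (hf : ∀ x y, f (br' x y) = br' (f x) (f y))
    (I : Submodule K L) (n : ℕ) :
    derivedSeriesFor br' (I.map f.toLinearMap) n =
      (derivedSeriesFor br' I n).map f.toLinearMap := by
  induction n with
  | zero => rfl
  | succ n ih =>
    rw [derivedSeriesFor, derivedSeriesFor, ih, Submodule.map_span]
    congr 1
    ext z
    constructor
    · rintro ⟨-, ⟨x, hx, rfl⟩, -, ⟨y, hy, rfl⟩, rfl⟩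
      exact ⟨br' x y, ⟨x, hx, y, hy, rfl⟩, hf x y⟩
    · rintro ⟨-, ⟨x, hx, y, hy, rfl⟩, rfl⟩
      exact ⟨f x, Submodule.mem_map_of_mem hx, f y, Submodule.mem_map_of_mem hy, (hf x y).symm⟩

theorem IsSolvableFor.map {f : L ≃ₗ[K] L} (hf : ∀ x y, f (br' x y) = br' (f x) (f y))
    {I : Submodule K L} (hI : IsSolvableFor br' I) : IsSolvableFor br' (I.map f.toLinearMap) :=
  let ⟨n, hn⟩ := hI
  ⟨n, by rw [derivedSeriesFor_map hf, hn, Submodule.map_bot]⟩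

theorem IsLieIdealFor.map {f : L ≃ₗ[K] L} (hf : ∀ x y, f (br' x y) = br' (f x) (f y))
    {I : Submodule K L} (hI : IsLieIdealFor br' I) : IsLieIdealFor br' (I.map f.toLinearMap) := by
  rintro - ⟨x, hx, rfl⟩ y
  have h := hI x hx (f.symm y)
  rw [LinearEquiv.coe_coe, ← f.apply_symm_apply y, ← hf, ← hf]
  exact ⟨Submodule.mem_map_of_mem h.1, Submodule.mem_map_of_mem h.2⟩

end DerivedSeries

section Bilinear

variable {K L : Type*} [Field K] [AddCommGroup L] [Module K L] (B : L →ₗ[K] L →ₗ[K] L)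

theorem isLieIdealFor_bot : IsLieIdealFor (B · ·) (⊥ : Submodule K L) := by
  rintro x hx y
  rw [(Submodule.mem_bot K).mp hx]
  simp

variable {B}

theorem IsLieIdealFor.sup {I J : Submodule K L} (hI : IsLieIdealFor (B · ·) I)
    (hJ : IsLieIdealFor (B · ·) J) : IsLieIdealFor (B · ·) (I ⊔ J) := by
  intro x hx y
  obtain ⟨a, ha, b, hb, rfl⟩ := Submodule.mem_sup.mp hx
  simp only [map_add, LinearMap.add_apply]
  exact ⟨Submodule.add_mem_sup (hI a ha y).1 (hJ b hb y).1,
    Submodule.add_mem_sup (hI a ha y).2 (hJ b hb y).2⟩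

theorem derivedSeriesFor_sup_le {I J : Submodule K L} (hJ : IsLieIdealFor (B · ·) J) (n : ℕ) :
    derivedSeriesFor (B · ·) (I ⊔ J) n ≤ derivedSeriesFor (B · ·) I n ⊔ J := by
  induction n with
  | zero => exact le_rfl
  | succ n ih =>
    refine Submodule.span_le.mpr ?_
    rintro - ⟨x, hx, y, hy, rfl⟩
    obtain ⟨a, ha, b, hb, rfl⟩ := Submodule.mem_sup.mp (ih hx)
    obtain ⟨c, hc, d, hd, rfl⟩ := Submodule.mem_sup.mp (ih hy)
    have hac : B a c ∈ derivedSeriesFor (B · ·) I (n + 1) :=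
      Submodule.subset_span ⟨a, ha, c, hc, rfl⟩
    have hrest : B a d + B b (c + d) ∈ J := J.add_mem (hJ d hd a).2 (hJ b hb (c + d)).1
    have hsplit : B (a + b) (c + d) = B a c + (B a d + B b (c + d)) := by
      simp only [map_add, LinearMap.add_apply]
      abel
    change B (a + b) (c + d) ∈ _
    rw [hsplit]
    exact Submodule.add_mem_sup hac hrest

theorem IsSolvableFor.sup {I J : Submodule K L} (hJ : IsLieIdealFor (B · ·) J)
    (hIs : IsSolvableFor (B · ·) I) (hJs : IsSolvableFor (B · ·) J) :
    IsSolvableFor (B · ·) (I ⊔ J) := by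
  obtain ⟨n, hn⟩ := hIs
  obtain ⟨m, hm⟩ := hJs
  have hle : derivedSeriesFor (B · ·) (I ⊔ J) n ≤ J := by
    simpa [hn] using derivedSeriesFor_sup_le hJ (I := I) n
  refine ⟨n + m, le_bot_iff.mp ?_⟩
  rw [derivedSeriesFor_add, ← hm]
  exact derivedSeriesFor_mono hle m

theorem isLieIdealFor_and_isSolvableFor_finset_sup {ι : Type*} {M : ι → Submodule K L}
    (s : Finset ι)
    (hideal : ∀ i ∈ s, IsLieIdealFor (B · ·) (M i))
    (hsolv : ∀ i ∈ s, IsSolvableFor (B · ·) (M i)) :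
    IsLieIdealFor (B · ·) (s.sup M) ∧ IsSolvableFor (B · ·) (s.sup M) :=
  Finset.sup_induction (p := fun J => IsLieIdealFor (B · ·) J ∧ IsSolvableFor (B · ·) J)
    ⟨isLieIdealFor_bot B, 0, rfl⟩
    (fun _ h₁ _ h₂ => ⟨h₁.1.sup h₂.1, IsSolvableFor.sup h₂.1 h₁.2 h₂.2⟩)
    (fun i hi => ⟨hideal i hi, hsolv i hi⟩)

theorem IsSolvableFor.of_le_iSup {ι : Type*} {N : Submodule K L}
    (hN : N.FG) (M : ι → Submodule K L) (hle : N ≤ ⨆ i, M i)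
    (hideal : ∀ i, IsLieIdealFor (B · ·) (M i)) (hsolv : ∀ i, IsSolvableFor (B · ·) (M i)) :
    IsSolvableFor (B · ·) N := by
  obtain ⟨s, hs⟩ := CompleteLattice.IsCompactElement.exists_finset_of_le_iSup _
    ((Submodule.fg_iff_compact N).mp hN) M hle
  rw [← Finset.sup_eq_iSup] at hs
  exact (isLieIdealFor_and_isSolvableFor_finset_sup s (fun i _ => hideal i)
    (fun i _ => hsolv i)).2.mono hs

end Bilinear

section Translates

variable {K L : Type*} [Field K] [AddCommGroup L] [Module K L]

theorem inducedBracket_eq_compl₁₂ (br : L →ₗ[K] L →ₗ[K] L) (α β : L ≃ₗ[K] L) :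
    inducedBracket br α β = (br.compl₁₂ α.symm.toLinearMap β.symm.toLinearMap · ·) :=
  rfl

def translatesSup (G : Subgroup (L ≃ₗ[K] L)) (I : Submodule K L) : Submodule K L :=
  ⨆ g : G, I.map (g : L ≃ₗ[K] L).toLinearMap

theorem le_translatesSup (G : Subgroup (L ≃ₗ[K] L)) (I : Submodule K L) :
    I ≤ translatesSup G I :=
  (Submodule.map_id I).ge.trans (le_iSup (fun g : G => I.map (g : L ≃ₗ[K] L).toLinearMap) 1)

theorem apply_mem_translatesSup {G : Subgroup (L ≃ₗ[K] L)} {I : Submodule K L} {h : L ≃ₗ[K] L}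
    (hG : h ∈ G) {x : L} (hx : x ∈ translatesSup G I) : h x ∈ translatesSup G I := by
  suffices (translatesSup G I).map h.toLinearMap ≤ translatesSup G I from this ⟨x, hx, rfl⟩
  rw [translatesSup, Submodule.map_iSup]
  refine iSup_le fun g => ?_
  rw [← Submodule.map_comp]
  exact le_iSup (fun g : G => I.map (g : L ≃ₗ[K] L).toLinearMap) ⟨h * g, G.mul_mem hG g.2⟩

end Translates

section BiHomAut

variable {K L : Type*} [Field K] [AddCommGroup L] [Module K L]
  (br : L →ₗ[K] L →ₗ[K] L) (α β : L ≃ₗ[K] L)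

def bracketAut : Subgroup (L ≃ₗ[K] L) where
  carrier := {f | ∀ x y, f (br x y) = br (f x) (f y)}
  one_mem' _ _ := rfl
  mul_mem' {f g} hf hg x y := by
    rw [LinearEquiv.mul_apply, hg x y, hf]
    rfl
  inv_mem' {f} hf x y := by
    apply f.injective
    rw [hf]
    simp only [LinearEquiv.coe_inv, LinearEquiv.apply_symm_apply]

def biHomAut : Subgroup (L ≃ₗ[K] L) :=
  bracketAut br ⊓ Subgroup.centralizer {α, β}

variable {br α β}

theorem map_inducedBracket_of_mem_biHomAut {f : L ≃ₗ[K] L} (hf : f ∈ biHomAut br α β)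
    (x y : L) : f (inducedBracket br α β x y) = inducedBracket br α β (f x) (f y) := by
  obtain ⟨hbr, hcent⟩ := hf
  have hα : Commute α f := Subgroup.mem_centralizer_iff.mp hcent α (Set.mem_insert _ _)
  have hβ : Commute β f := Subgroup.mem_centralizer_iff.mp hcent β (Set.mem_insert_of_mem _ rfl)
  rw [inducedBracket, inducedBracket, hbr]
  exact congr_arg₂ (br · ·) (DFunLike.congr_fun hα.inv_left.eq x).symm
    (DFunLike.congr_fun hβ.inv_left.eq y).symm

theorem mem_biHomAut_left (hcomm : ∀ x, α (β x) = β (α x))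
    (hmul : ∀ x y, α (br x y) = br (α x) (α y)) : α ∈ biHomAut br α β :=
  ⟨hmul, Subgroup.mem_centralizer_iff.mpr <| by
    rintro _ (rfl | rfl)
    exacts [rfl, LinearEquiv.ext fun x => (hcomm x).symm]⟩

theorem mem_biHomAut_right (hcomm : ∀ x, α (β x) = β (α x))
    (hmul : ∀ x y, β (br x y) = br (β x) (β y)) : β ∈ biHomAut br α β :=
  ⟨hmul, Subgroup.mem_centralizer_iff.mpr <| by
    rintro _ (rfl | rfl)
    exacts [LinearEquiv.ext hcomm, rfl]⟩

end BiHomAut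

section Simple

variable {K L : Type*} [Field K] [AddCommGroup L] [Module K L]
  {br : L →ₗ[K] L →ₗ[K] L} {α β : L ≃ₗ[K] L}

theorem bracket_eq_apply_inducedBracket (hmulα : ∀ x y, α (br x y) = br (α x) (α y)) (a z : L) :
    br a z = α (inducedBracket br α β a (β (α.symm z))) := by
  simp [inducedBracket, hmulα]

theorem isBiHomIdeal_translatesSup (hcomm : ∀ x, α (β x) = β (α x))
    (hmulα : ∀ x y, α (br x y) = br (α x) (α y)) (hmulβ : ∀ x y, β (br x y) = br (β x) (β y))
    {I : Submodule K L} (hI : IsLieIdealFor (inducedBracket br α β) I) :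
    IsBiHomIdeal br α.toLinearMap β.toLinearMap (translatesSup (biHomAut br α β) I) := by
  have hαG := mem_biHomAut_left hcomm hmulα
  refine ⟨fun x => apply_mem_translatesSup hαG,
    fun x => apply_mem_translatesSup (mem_biHomAut_right hcomm hmulβ), fun x hx => ?_⟩
  refine Submodule.iSup_induction _ (motive := fun x => ∀ y, br x y ∈ _) hx ?_ (by simp) ?_
  · rintro ⟨g, hg⟩ - ⟨a, ha, rfl⟩ y
    have hbr : br (g a) y = g (br a (g⁻¹ y)) := by
      rw [hg.1]
      simp
    rw [LinearEquiv.coe_coe, hbr, bracket_eq_apply_inducedBracket hmulα]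
    exact apply_mem_translatesSup hg (apply_mem_translatesSup hαG
      (le_translatesSup _ I (hI a ha _).1))
  · intro x₁ x₂ h₁ h₂ y
    rw [map_add, LinearMap.add_apply]
    exact add_mem (h₁ y) (h₂ y)

end Simple

namespace IsSimpleBiHom

variable {K L : Type*} [Field K] [AddCommGroup L] [Module K L] {br : L →ₗ[K] L →ₗ[K] L}

theorem span_bracket_eq_top {α β : L →ₗ[K] L} (hsimple : IsSimpleBiHom br α β)
    (hmulα : ∀ x y, α (br x y) = br (α x) (α y)) (hmulβ : ∀ x y, β (br x y) = br (β x) (β y)) :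
    Submodule.span K {z | ∃ u v, br u v = z} = ⊤ := by
  set D := Submodule.span K {z | ∃ u v, br u v = z}
  have hstable : ∀ f : L →ₗ[K] L, (∀ x y, f (br x y) = br (f x) (f y)) → ∀ x ∈ D, f x ∈ D := by
    intro f hf x hx
    refine (Submodule.span_le (p := D.comap f)).mpr ?_ hx
    rintro - ⟨u, v, rfl⟩
    exact Submodule.subset_span ⟨f u, f v, (hf u v).symm⟩
  refine (hsimple.2 D ⟨hstable α hmulα, hstable β hmulβ,
    fun x _ y => Submodule.subset_span ⟨x, y, rfl⟩⟩).resolve_left fun hbot => ?_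
  obtain ⟨x, y, hxy⟩ := hsimple.1
  exact hxy ((Submodule.mem_bot K).mp (hbot ▸ Submodule.subset_span ⟨x, y, rfl⟩))

variable {α β : L ≃ₗ[K] L}

theorem derivedSeriesFor_top (hsimple : IsSimpleBiHom br α.toLinearMap β.toLinearMap)
    (hmulα : ∀ x y, α (br x y) = br (α x) (α y)) (hmulβ : ∀ x y, β (br x y) = br (β x) (β y))
    (n : ℕ) : derivedSeriesFor (inducedBracket br α β) (⊤ : Submodule K L) n = ⊤ := by
  induction n with
  | zero => rfl
  | succ n ih =>
    rw [derivedSeriesFor, ih]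
    refine .trans (congrArg _ (Set.ext fun z => ⟨?_, ?_⟩))
      (hsimple.span_bracket_eq_top hmulα hmulβ)
    · rintro ⟨x, -, y, -, rfl⟩
      exact ⟨α.symm x, β.symm y, rfl⟩
    · rintro ⟨u, v, rfl⟩
      exact ⟨α u, trivial, β v, trivial, by simp [inducedBracket]⟩

theorem not_isSolvableFor_top (hsimple : IsSimpleBiHom br α.toLinearMap β.toLinearMap)
    (hmulα : ∀ x y, α (br x y) = br (α x) (α y)) (hmulβ : ∀ x y, β (br x y) = br (β x) (β y)) :
    ¬ IsSolvableFor (inducedBracket br α β) (⊤ : Submodule K L) := by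
  rintro ⟨n, hn⟩
  obtain ⟨x, y, hxy⟩ := hsimple.1
  rw [hsimple.derivedSeriesFor_top hmulα hmulβ] at hn
  exact hxy (Submodule.eq_bot_iff _ |>.mp hn _ trivial)

end IsSimpleBiHom

theorem induced_lie_semisimple_general {L : Type*} [AddCommGroup L] [Module ℂ L]
    [FiniteDimensional ℂ L]
    (br : L →ₗ[ℂ] L →ₗ[ℂ] L) (α β : L ≃ₗ[ℂ] L)
    (hcomm : ∀ x : L, α (β x) = β (α x))
    (hmulα : ∀ x y : L, α (br x y) = br (α x) (α y))
    (hmulβ : ∀ x y : L, β (br x y) = br (β x) (β y))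
    (hsimple : IsSimpleBiHom br α.toLinearMap β.toLinearMap) :
    ∀ I : Submodule ℂ L, IsLieIdealFor (inducedBracket br α β) I →
      IsSolvableFor (inducedBracket br α β) I → I = ⊥ := by
  intro I hI hsolv
  by_contra hne
  have htop : translatesSup (biHomAut br α β) I = ⊤ :=
    (hsimple.2 _ (isBiHomIdeal_translatesSup hcomm hmulα hmulβ hI)).resolve_left
      fun hbot => hne (eq_bot_iff.mpr (hbot ▸ le_translatesSup _ I))
  refine hsimple.not_isSolvableFor_top hmulα hmulβ ?_
  have hhom (g : biHomAut br α β) := map_inducedBracket_of_mem_biHomAut g.2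
  rw [inducedBracket_eq_compl₁₂] at hI hsolv hhom ⊢
  exact IsSolvableFor.of_le_iSup Module.Finite.fg_top _ htop.ge
    (fun g => hI.map (hhom g)) (fun g => hsolv.map (hhom g))

/-- The induced Lie algebra of a finite-dimensional simple
multiplicative BiHom-Lie algebra over `ℂ` is semisimple: every solvable Lie ideal of
the induced Lie algebra is zero. -/
theorem induced_lie_semisimple {L : Type*} [AddCommGroup L] [Module ℂ L]
    [FiniteDimensional ℂ L]
    (br : L →ₗ[ℂ] L →ₗ[ℂ] L) (α β : L ≃ₗ[ℂ] L)
    (hcomm : ∀ x : L, α (β x) = β (α x))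
    (hmulα : ∀ x y : L, α (br x y) = br (α x) (α y))
    (hmulβ : ∀ x y : L, β (br x y) = br (β x) (β y))
    (hskew : ∀ x y : L, br (β x) (α y) = - br (β y) (α x))
    (hjac : ∀ x y z : L,
      br (β (β x)) (br (β y) (α z)) + br (β (β y)) (br (β z) (α x))
        + br (β (β z)) (br (β x) (α y)) = 0)
    (hsimple : IsSimpleBiHom br α.toLinearMap β.toLinearMap) :
    ∀ I : Submodule ℂ L, IsLieIdealFor (inducedBracket br α β) I →
      IsSolvableFor (inducedBracket br α β) I → I = ⊥ :=
  induced_lie_semisimple_general br α β hcomm hmulα hmulβ hsimple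
end

section
/- Let α be a Lie algebra automorphism of sl(2,ℂ) (the Lie algebra of traceless 2×2 complex matrices with the commutator bracket), regarded as a ℂ-linear endomorphism of the 3-dimensional vector space sl(2,ℂ). Then there exists a nonzero a ∈ ℂ such that the eigenvalues of α are 1, a, and a⁻¹; equivalently, the characteristic polynomial of α is (X-1)(X-a)(X-a⁻¹). -/
open Polynomial

/-!
An automorphism `α` of `sl(2, ℂ)` preserves the Killing form `κ`, which is nondegenerate, and the
Cartan 3-form `κ(⁅x, y⁆, z)`, which is a nonzero volume form on this 3-dimensional algebra. So `α`
is orthogonal for `κ` and has determinant `1`. An orthogonal map of determinant `1` in odd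
dimension fixes a nonzero vector, so `1` is an eigenvalue, and the product of the other two
eigenvalues is `det α = 1`.
-/

theorem LinearMap.det_eq_one_of_alternatingMap_comp_basis {R M ι : Type*} [CommRing R]
    [IsDomain R] [AddCommGroup M] [Module R M] [Fintype ι] [DecidableEq ι]
    (b : Module.Basis ι R M) (ω : M [⋀^ι]→ₗ[R] R) (hω : ω b ≠ 0) {f : M →ₗ[R] M}
    (hf : ω (f ∘ b) = ω b) : LinearMap.det f = 1 := by
  have h := congrArg (· (f ∘ b)) (ω.eq_smul_basis_det b)
  simp only [AlternatingMap.smul_apply, b.det_comp, b.det_self, smul_eq_mul, mul_one, hf] at h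
  exact (mul_eq_left₀ hω).mp h.symm

theorem LinearMap.BilinForm.IsOrthogonal.det_one_sub_eq_zero {K M : Type*} [Field K]
    [NeZero (2 : K)] [AddCommGroup M] [Module K M] [FiniteDimensional K M]
    {B : LinearMap.BilinForm K M} (hB : B.Nondegenerate) {f : M →ₗ[K] M} (hf : B.IsOrthogonal f)
    (hdet : LinearMap.det f = 1) (hodd : Odd (Module.finrank K M)) :
    LinearMap.det (1 - f) = 0 := by
  let b := Module.finBasis K M
  have hcompl : B.compl₁₂ (1 - f) f = B.compl₂ (f - 1) := by
    ext x y
    simp [hf x y]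
  have hG : (LinearMap.toMatrix₂ b b B).det ≠ 0 :=
    (LinearMap.nondegenerate_iff_det_ne_zero b).mp hB
  have hmat := congrArg (fun B' => (LinearMap.toMatrix₂ b b B').det) hcompl
  simp only [LinearMap.toMatrix₂_compl₁₂ b b, LinearMap.toMatrix₂_compl₂ b b, Matrix.det_mul,
    Matrix.det_transpose, LinearMap.det_toMatrix, hdet, mul_one] at hmat
  have hneg : LinearMap.det (f - 1) = -LinearMap.det (1 - f) := by
    rw [← neg_sub, ← neg_one_smul K (1 - f), LinearMap.det_smul, hodd.neg_one_pow, neg_one_mul]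
  rw [hneg] at hmat
  have h2 : (2 : K) * LinearMap.det (1 - f) * (LinearMap.toMatrix₂ b b B).det = 0 := by
    linear_combination hmat
  simpa [hG, two_ne_zero] using h2

theorem Polynomial.Monic.exists_eq_X_sub_one_mul_X_sub_mul_X_sub_inv {K : Type*} [Field K]
    [IsAlgClosed K] {p : K[X]} (hp : p.Monic) (hdeg : p.natDegree = 3) (h1 : p.IsRoot 1)
    (h0 : p.coeff 0 = -1) : ∃ a : K, a ≠ 0 ∧ p = (X - C 1) * (X - C a) * (X - C a⁻¹) := by
  have hroots : Multiset.card p.roots = 3 := IsAlgClosed.card_roots_eq_natDegree.trans hdeg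
  obtain ⟨s, hs⟩ := Multiset.exists_cons_of_mem ((mem_roots hp.ne_zero).mpr h1)
  obtain ⟨a, b, rfl⟩ : ∃ a b, s = {a, b} := by
    rw [← Multiset.card_eq_two]
    simpa [hs] using hroots
  have hprod : p = (X - C 1) * (X - C a) * (X - C b) := by
    rw [← prod_multiset_X_sub_C_of_monic_of_roots_card_eq hp (hroots.trans hdeg.symm), hs]
    simp [mul_assoc]
  have hab : a * b = 1 := by
    rw [hprod] at h0
    simpa [mul_coeff_zero] using h0
  refine ⟨a, left_ne_zero_of_mul_eq_one hab, ?_⟩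
  rwa [← eq_inv_of_mul_eq_one_right hab]

namespace LieAlgebra

variable (R L : Type*) [CommRing R] [LieRing L] [LieAlgebra R L]

lemma killingForm_lie_apply_left (x y : L) : killingForm R L ⁅x, y⁆ x = 0 := by
  rw [LieModule.traceForm_apply_lie_apply', lie_self, map_zero, neg_zero]

lemma killingForm_lie_apply_right (x y : L) : killingForm R L ⁅x, y⁆ y = 0 := by
  rw [LieModule.traceForm_apply_lie_apply, lie_self, map_zero]

noncomputable def cartanThreeForm : L [⋀^Fin 3]→ₗ[R] R where
  __ := MultilinearMap.mk' (fun v => killingForm R L ⁅v 0, v 1⁆ (v 2))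
    (fun v i x y => by fin_cases i <;> simp [add_lie, lie_add])
    (fun v i c x => by fin_cases i <;> simp [smul_lie, lie_smul])
  map_eq_zero_of_eq' v i j hv hij := by
    fin_cases i <;> fin_cases j <;>
      simp_all [killingForm_lie_apply_left, killingForm_lie_apply_right]

lemma cartanThreeForm_apply (v : Fin 3 → L) :
    cartanThreeForm R L v = killingForm R L ⁅v 0, v 1⁆ (v 2) := rfl

variable {R L}

lemma cartanThreeForm_comp_lieEquiv (e : L ≃ₗ⁅R⁆ L) (v : Fin 3 → L) :
    cartanThreeForm R L (e ∘ v) = cartanThreeForm R L v := by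
  simp only [cartanThreeForm_apply, Function.comp_apply, ← e.map_lie, killingForm_of_equiv_apply]

lemma _root_.LieEquiv.det_eq_one_of_cartanThreeForm_ne_zero [IsDomain R] (e : L ≃ₗ⁅R⁆ L)
    (b : Module.Basis (Fin 3) R L) (hb : cartanThreeForm R L b ≠ 0) :
    LinearMap.det (e : L →ₗ[R] L) = 1 :=
  LinearMap.det_eq_one_of_alternatingMap_comp_basis b _ hb (cartanThreeForm_comp_lieEquiv e b)

end LieAlgebra

namespace LieAlgebra.SpecialLinear

variable {R : Type*} [CommRing R]

lemma sl_two_val_one_one (x : sl (Fin 2) R) : x.val 1 1 = -x.val 0 0 := by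
  have h : x.val.trace = 0 := x.2
  rw [Matrix.trace_fin_two] at h
  linear_combination h

variable (R) in
def slTwoEquivFun : sl (Fin 2) R ≃ₗ[R] (Fin 3 → R) where
  toFun x := ![x.val 0 0, x.val 0 1, x.val 1 0]
  map_add' x y := by ext i; fin_cases i <;> rfl
  map_smul' c x := by ext i; fin_cases i <;> rfl
  invFun c := ⟨!![c 0, c 1; c 2, -c 0], by simp [sl, Matrix.trace_fin_two]⟩
  left_inv x := by
    ext i j
    fin_cases i <;> fin_cases j <;> simp [sl_two_val_one_one]
  right_inv c := by ext i; fin_cases i <;> rfl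

lemma slTwoEquivFun_symm_apply_val (c : Fin 3 → R) :
    ((slTwoEquivFun R).symm c).val = !![c 0, c 1; c 2, -c 0] := rfl

variable (R) in
noncomputable def slTwoBasis : Module.Basis (Fin 3) R (sl (Fin 2) R) :=
  .ofEquivFun (slTwoEquivFun R)

@[simp] lemma slTwoBasis_repr (x : sl (Fin 2) R) :
    (slTwoBasis R).repr x = ![x.val 0 0, x.val 0 1, x.val 1 0] := by
  ext i
  exact Module.Basis.ofEquivFun_repr_apply _ _ _

@[simp] lemma slTwoBasis_zero : (slTwoBasis R 0).val = !![1, 0; 0, -1] := by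
  rw [slTwoBasis, Module.Basis.coe_ofEquivFun, slTwoEquivFun_symm_apply_val]
  simp

@[simp] lemma slTwoBasis_one : (slTwoBasis R 1).val = !![0, 1; 0, 0] := by
  rw [slTwoBasis, Module.Basis.coe_ofEquivFun, slTwoEquivFun_symm_apply_val]
  simp

@[simp] lemma slTwoBasis_two : (slTwoBasis R 2).val = !![0, 0; 1, 0] := by
  rw [slTwoBasis, Module.Basis.coe_ofEquivFun, slTwoEquivFun_symm_apply_val]
  simp

lemma killingForm_sl_two_apply (x y : sl (Fin 2) R) :
    killingForm R (sl (Fin 2) R) x y =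
      8 * x.val 0 0 * y.val 0 0 + 4 * x.val 0 1 * y.val 1 0 + 4 * x.val 1 0 * y.val 0 1 := by
  rw [killingForm_apply_apply, LinearMap.trace_eq_matrix_trace R (slTwoBasis R),
    LinearMap.toMatrix_comp _ (slTwoBasis R)]
  simp [Matrix.trace, Fin.sum_univ_three, Matrix.mul_apply, LinearMap.toMatrix_apply, Ring.lie_def,
    Fin.sum_univ_two, sl_two_val_one_one]
  ring

lemma cartanThreeForm_slTwoBasis : cartanThreeForm R (sl (Fin 2) R) (slTwoBasis R) = 8 := by
  simp [cartanThreeForm_apply, killingForm_sl_two_apply, Ring.lie_def]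
  norm_num

lemma killingForm_sl_two_nondegenerate {K : Type*} [Field K] [NeZero (2 : K)] :
    (killingForm K (sl (Fin 2) K)).Nondegenerate := by
  rw [LinearMap.BilinForm.nondegenerate_iff_det_ne_zero (slTwoBasis K), Matrix.det_fin_three]
  simp [LinearMap.BilinForm.toMatrix_apply, killingForm_sl_two_apply]
  rw [show (8 : K) = 2 ^ 3 by norm_num, show (4 : K) = 2 ^ 2 by norm_num]
  exact ⟨pow_ne_zero 3 two_ne_zero, pow_ne_zero 2 two_ne_zero⟩

end LieAlgebra.SpecialLinear

/-- Any Lie algebra automorphism `α` of `sl(2, ℂ)` has eigenvalues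
`1, a, a⁻¹` for some nonzero `a ∈ ℂ`: its characteristic polynomial is
`(X - 1)(X - a)(X - a⁻¹)`. -/
theorem sl2_automorphism_eigenvalues
    (α : LieAlgebra.SpecialLinear.sl (Fin 2) ℂ →ₗ[ℂ] LieAlgebra.SpecialLinear.sl (Fin 2) ℂ)
    (hbij : Function.Bijective α)
    (haut : ∀ x y : LieAlgebra.SpecialLinear.sl (Fin 2) ℂ, α ⁅x, y⁆ = ⁅α x, α y⁆) :
    ∃ a : ℂ, a ≠ 0 ∧
      LinearMap.charpoly α = (X - C 1) * (X - C a) * (X - C a⁻¹) := by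
  let e := LieEquiv.ofBijective { α with map_lie' := haut _ _ } hbij
  let b := LieAlgebra.SpecialLinear.slTwoBasis ℂ
  have hdim : Module.finrank ℂ (LieAlgebra.SpecialLinear.sl (Fin 2) ℂ) = 3 :=
    Module.finrank_eq_card_basis b ▸ rfl
  have hdet : LinearMap.det α = 1 :=
    e.det_eq_one_of_cartanThreeForm_ne_zero b
      (by simp [b, LieAlgebra.SpecialLinear.cartanThreeForm_slTwoBasis])
  have h1 : α.charpoly.IsRoot 1 := by
    rw [IsRoot, LinearMap.eval_charpoly, map_one]
    exact LinearMap.BilinForm.IsOrthogonal.det_one_sub_eq_zero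
      LieAlgebra.SpecialLinear.killingForm_sl_two_nondegenerate
      (LieAlgebra.killingForm_of_equiv_apply e) hdet (by rw [hdim]; decide)
  have h0 : α.charpoly.coeff 0 = -1 := by
    have := LinearMap.det_eq_sign_charpoly_coeff α
    rw [hdet, hdim] at this
    linear_combination this
  exact α.charpoly_monic.exists_eq_X_sub_one_mul_X_sub_mul_X_sub_inv
    (by rw [LinearMap.charpoly_natDegree, hdim]) h1 h0
end

section
/- Let a, b be nonzero complex numbers. Let L = ℂ³ with basis (e₁,e₂,e₃), let α be the linear map with matrix diag(1, a, 1/a) and β the linear map with matrix diag(1, b, 1/b) in this basis, and let [·,·] be the bilinear map determined by [e₁,e₁] = 0, [e₁,e₂] = 2b·e₂, [e₁,e₃] = -(2/b)·e₃, [e₂,e₁] = -2a·e₂, [e₂,e₂] = 0, [e₂,e₃] = (a/b)·e₁, [e₃,e₁] = (2/a)·e₃, [e₃,e₂] = -(b/a)·e₁, [e₃,e₃] = 0. Then (L,[·,·],α,β) is a regular multiplicative BiHom-Lie algebra: α∘β = β∘α, α[x,y] = [α(x),α(y)] and β[x,y] = [β(x),β(y)], [β(x),α(y)] = -[β(y),α(x)],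 the BiHom-Jacobi identity [β²(x),[β(y),α(z)]] + [β²(y),[β(z),α(x)]] + [β²(z),[β(x),α(y)]] = 0 holds for all x,y,z ∈ L, and α, β are bijective. -/
/-!
In the standard basis `α` and `β` are diagonal and the bracket has monomial structure constants,
so every BiHom-Lie axiom becomes a coordinatewise identity between Laurent polynomials in `a`
and `b`. Once `α`, `β` and the bracket are written in coordinates, each axiom is checked by
clearing denominators.
-/

section Coordinates

variable {R ι M : Type*} [CommSemiring R] [Fintype ι] [DecidableEq ι] [AddCommMonoid M] [Module R M]

theorem LinearMap.apply_eq_mul_of_single (f : (ι → R) →ₗ[R] (ι → R)) (d : ι → R)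
    (hf : ∀ i, f (Pi.single i 1) = d i • Pi.single i 1) (x : ι → R) : f x = d * x := by
  conv_lhs => rw [pi_eq_sum_univ' x]
  ext j
  simp [hf, Pi.single_apply, mul_comm]

theorem LinearMap.apply₂_eq_sum_single (B : (ι → R) →ₗ[R] (ι → R) →ₗ[R] M) (x y : ι → R) :
    B x y = ∑ i, ∑ j, (x i * y j) • B (Pi.single i 1) (Pi.single j 1) := by
  conv_lhs => rw [pi_eq_sum_univ' x, pi_eq_sum_univ' y]
  simp only [map_sum, map_smul, LinearMap.sum_apply, LinearMap.smul_apply, Finset.smul_sum]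
  rw [Finset.sum_comm]
  simp [mul_smul, smul_comm (y _)]

end Coordinates

theorem Function.bijective_of_eq_mul {K ι : Type*} [Field K] {f : (ι → K) → ι → K} {d : ι → K}
    (hd : ∀ i, d i ≠ 0) (hf : ∀ x, f x = d * x) : Function.Bijective f :=
  Function.bijective_iff_has_inverse.mpr ⟨fun x => d⁻¹ * x,
    fun x => by ext i; simp [hf, hd i], fun x => by ext i; simp [hf, hd i]⟩

structure IsBiHomLie {R L : Type*} [CommRing R] [AddCommGroup L] [Module R L]
    (α β : L →ₗ[R] L) (br : L →ₗ[R] L →ₗ[R] L) : Prop where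
  comm : ∀ x, α (β x) = β (α x)
  alpha_bracket : ∀ x y, α (br x y) = br (α x) (α y)
  beta_bracket : ∀ x y, β (br x y) = br (β x) (β y)
  skew : ∀ x y, br (β x) (α y) = - br (β y) (α x)
  jacobi : ∀ x y z, br (β (β x)) (br (β y) (α z)) + br (β (β y)) (br (β z) (α x))
    + br (β (β z)) (br (β x) (α y)) = 0

def l1Bracket {K : Type*} [Field K] (a b : K) (x y : Fin 3 → K) : Fin 3 → K :=
  ![a / b * (x 1 * y 2) - b / a * (x 2 * y 1),
    2 * b * (x 0 * y 1) - 2 * a * (x 1 * y 0),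
    2 / a * (x 2 * y 0) - 2 / b * (x 0 * y 2)]

theorem isBiHomLie_l1 {K : Type*} [Field K] {a b : K} (ha : a ≠ 0) (hb : b ≠ 0)
    (α β : (Fin 3 → K) →ₗ[K] (Fin 3 → K)) (br : (Fin 3 → K) →ₗ[K] (Fin 3 → K) →ₗ[K] (Fin 3 → K))
    (hα : ∀ x, α x = ![1, a, a⁻¹] * x) (hβ : ∀ x, β x = ![1, b, b⁻¹] * x)
    (hbr : ∀ x y, br x y = l1Bracket a b x y) : IsBiHomLie α β br where
  comm x := by ext i; fin_cases i <;> simp [hα, hβ] <;> ring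
  alpha_bracket x y := by
    ext i; fin_cases i <;> simp [hα, hbr, l1Bracket] <;> field_simp
  beta_bracket x y := by
    ext i; fin_cases i <;> simp [hβ, hbr, l1Bracket] <;> field_simp
  skew x y := by
    ext i; fin_cases i <;> simp [hα, hβ, hbr, l1Bracket] <;> field_simp
  jacobi x y z := by
    ext i; fin_cases i <;> simp [hα, hβ, hbr, l1Bracket] <;> field_simp <;> ring

/-- The family `𝓛₁`: on `L = ℂ³` with standard basis `(e₁,e₂,e₃)`,
`α = diag(1, a, 1/a)`, `β = diag(1, b, 1/b)`, and the indicated bracket,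
`(L, [·,·], α, β)` is a regular multiplicative BiHom-Lie algebra. -/
theorem family_L1_is_biHomLie (a b : ℂ) (ha : a ≠ 0) (hb : b ≠ 0)
    (α β : (Fin 3 → ℂ) →ₗ[ℂ] (Fin 3 → ℂ))
    (br : (Fin 3 → ℂ) →ₗ[ℂ] (Fin 3 → ℂ) →ₗ[ℂ] (Fin 3 → ℂ))
    (e : Fin 3 → (Fin 3 → ℂ)) (he : e = fun i => Pi.single i 1)
    (hα0 : α (e 0) = e 0) (hα1 : α (e 1) = a • e 1) (hα2 : α (e 2) = a⁻¹ • e 2)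
    (hβ0 : β (e 0) = e 0) (hβ1 : β (e 1) = b • e 1) (hβ2 : β (e 2) = b⁻¹ • e 2)
    (h00 : br (e 0) (e 0) = 0)
    (h01 : br (e 0) (e 1) = (2 * b) • e 1)
    (h02 : br (e 0) (e 2) = (-(2 / b)) • e 2)
    (h10 : br (e 1) (e 0) = (-(2 * a)) • e 1)
    (h11 : br (e 1) (e 1) = 0)
    (h12 : br (e 1) (e 2) = (a / b) • e 0)
    (h20 : br (e 2) (e 0) = (2 / a) • e 2)
    (h21 : br (e 2) (e 1) = (-(b / a)) • e 0)
    (h22 : br (e 2) (e 2) = 0) :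
    (∀ x : Fin 3 → ℂ, α (β x) = β (α x)) ∧
    (∀ x y : Fin 3 → ℂ, α (br x y) = br (α x) (α y)) ∧
    (∀ x y : Fin 3 → ℂ, β (br x y) = br (β x) (β y)) ∧
    (∀ x y : Fin 3 → ℂ, br (β x) (α y) = - br (β y) (α x)) ∧
    (∀ x y z : Fin 3 → ℂ,
      br (β (β x)) (br (β y) (α z)) + br (β (β y)) (br (β z) (α x))
        + br (β (β z)) (br (β x) (α y)) = 0) ∧
    Function.Bijective α ∧ Function.Bijective β := by
  subst he
  have hα : ∀ x, α x = ![1, a, a⁻¹] * x :=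
    α.apply_eq_mul_of_single _ fun i => by fin_cases i <;> simpa
  have hβ : ∀ x, β x = ![1, b, b⁻¹] * x :=
    β.apply_eq_mul_of_single _ fun i => by fin_cases i <;> simpa
  have hbr : ∀ x y, br x y = l1Bracket a b x y := fun x y => by
    rw [br.apply₂_eq_sum_single]
    ext i
    fin_cases i <;>
      simp [Fin.sum_univ_three, h00, h01, h02, h10, h11, h12, h20, h21, h22, l1Bracket] <;> ring
  obtain ⟨hcomm, hα_br, hβ_br, hskew, hjacobi⟩ := isBiHomLie_l1 ha hb α β br hα hβ hbr
  exact ⟨hcomm, hα_br, hβ_br, hskew, hjacobi,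
    Function.bijective_of_eq_mul (by simp [Fin.forall_fin_succ, ha]) hα,
    Function.bijective_of_eq_mul (by simp [Fin.forall_fin_succ, hb]) hβ⟩
end

section
/- Let L = ℂ³ with basis (e₁,e₂,e₃), let α be the identity map, let β be the linear map whose matrix in this basis is the upper unitriangular matrix with rows (1,1,0), (0,1,1), (0,0,1), and let [·,·] be the bilinear map determined by [e₁,e₁] = 0, [e₁,e₂] = 2e₁, [e₁,e₃] = e₁ + 2e₂, [e₂,e₁] = -2e₁, [e₂,e₂] = -2e₁, [e₂,e₃] = e₁ + e₂ + 2e₃, [e₃,e₁] = e₁ - 2e₂, [e₃,e₂] = -3e₂ - 2e₃, [e₃,e₃] = -e₁ - e₂ - 2e₃. Then (L,[·,·],α,β) is a regular multiplicative BiHom-Lie algebra: α∘β = β∘α, α[x,y] = [α(x),α(y)] and β[x,y] = [β(x),β(y)], [β(x),α(y)] = -[β(y),α(x)], the BiHom-Jacobi identity [β²(x),[β(y),α(z)]] + [β²(y),[β(z),α(x)]] + [β²(z),[β(x),α(y)]] = 0 holds for all x,y,z ∈ L, and α, β are bijective. -/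
/-!
A linear map on `R³` is determined by its values on the standard basis, and a bilinear map by
its values on pairs of basis vectors, so `β` and the bracket coincide with the coordinate maps
`beta` and `bracket`. In coordinates every axiom becomes a polynomial identity in the
entries of `x, y, z`, which holds over any commutative ring; `β` is unitriangular, hence
invertible.
-/

namespace BiHomLieL2

variable (R : Type*) [CommRing R]

def beta : (Fin 3 → R) →ₗ[R] (Fin 3 → R) :=
  Matrix.toLin' !![1, 1, 0; 0, 1, 1; 0, 0, 1]

def bracket : (Fin 3 → R) →ₗ[R] (Fin 3 → R) →ₗ[R] (Fin 3 → R) :=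
  LinearMap.mk₂ R (fun x y =>
      ![2 * x 0 * y 1 + x 0 * y 2 - 2 * x 1 * y 0 - 2 * x 1 * y 1 + x 1 * y 2 + x 2 * y 0
          - x 2 * y 2,
        2 * x 0 * y 2 + x 1 * y 2 - 2 * x 2 * y 0 - 3 * x 2 * y 1 - x 2 * y 2,
        2 * x 1 * y 2 - 2 * x 2 * y 1 - 2 * x 2 * y 2])
    (fun _ _ _ => by ext i; fin_cases i <;> simp <;> ring)
    (fun _ _ _ => by ext i; fin_cases i <;> simp <;> ring)
    (fun _ _ _ => by ext i; fin_cases i <;> simp <;> ring)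
    (fun _ _ _ => by ext i; fin_cases i <;> simp <;> ring)

variable {R}

@[simp]
theorem beta_apply (x : Fin 3 → R) : beta R x = ![x 0 + x 1, x 1 + x 2, x 2] := by
  ext i; fin_cases i <;> simp [beta, Matrix.mulVec, dotProduct, Fin.sum_univ_three]

theorem eq_beta {β : (Fin 3 → R) →ₗ[R] (Fin 3 → R)}
    (h0 : β (Pi.single 0 1) = Pi.single 0 1)
    (h1 : β (Pi.single 1 1) = Pi.single 0 1 + Pi.single 1 1)
    (h2 : β (Pi.single 2 1) = Pi.single 1 1 + Pi.single 2 1) :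
    β = beta R := by
  refine (Pi.basisFun R (Fin 3)).ext fun i => ?_
  fin_cases i <;> ext j <;> fin_cases j <;> simp [h0, h1, h2]

theorem eq_bracket {br : (Fin 3 → R) →ₗ[R] (Fin 3 → R) →ₗ[R] (Fin 3 → R)}
    (h00 : br (Pi.single 0 1) (Pi.single 0 1) = 0)
    (h01 : br (Pi.single 0 1) (Pi.single 1 1) = (2 : R) • Pi.single 0 1)
    (h02 : br (Pi.single 0 1) (Pi.single 2 1) = Pi.single 0 1 + (2 : R) • Pi.single 1 1)
    (h10 : br (Pi.single 1 1) (Pi.single 0 1) = (-2 : R) • Pi.single 0 1)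
    (h11 : br (Pi.single 1 1) (Pi.single 1 1) = (-2 : R) • Pi.single 0 1)
    (h12 : br (Pi.single 1 1) (Pi.single 2 1) =
      Pi.single 0 1 + Pi.single 1 1 + (2 : R) • Pi.single 2 1)
    (h20 : br (Pi.single 2 1) (Pi.single 0 1) = Pi.single 0 1 - (2 : R) • Pi.single 1 1)
    (h21 : br (Pi.single 2 1) (Pi.single 1 1) =
      (-3 : R) • Pi.single 1 1 - (2 : R) • Pi.single 2 1)
    (h22 : br (Pi.single 2 1) (Pi.single 2 1) =
      - Pi.single 0 1 - Pi.single 1 1 - (2 : R) • Pi.single 2 1) :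
    br = bracket R := by
  refine LinearMap.ext_basis (Pi.basisFun R (Fin 3)) (Pi.basisFun R (Fin 3)) fun i j => ?_
  fin_cases i <;> fin_cases j <;> ext k <;> fin_cases k <;>
    simp [bracket, h00, h01, h02, h10, h11, h12, h20, h21, h22]

theorem beta_bracket (x y : Fin 3 → R) :
    beta R (bracket R x y) = bracket R (beta R x) (beta R y) := by
  ext i; fin_cases i <;> simp [bracket] <;> ring

theorem bracket_beta_skew (x y : Fin 3 → R) :
    bracket R (beta R x) y = - bracket R (beta R y) x := by
  ext i; fin_cases i <;> simp [bracket] <;> ring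

theorem bracket_biHom_jacobi (x y z : Fin 3 → R) :
    bracket R (beta R (beta R x)) (bracket R (beta R y) z)
      + bracket R (beta R (beta R y)) (bracket R (beta R z) x)
      + bracket R (beta R (beta R z)) (bracket R (beta R x) y) = 0 := by
  ext i; fin_cases i <;> simp [bracket] <;> ring

theorem beta_bijective : Function.Bijective (beta R) := by
  refine Function.bijective_iff_has_inverse.mpr
    ⟨fun x => ![x 0 - x 1 + x 2, x 1 - x 2, x 2], fun x => ?_, fun x => ?_⟩
  all_goals ext i; fin_cases i <;> simp <;> ring

end BiHomLieL2

open BiHomLieL2 in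
/-- The family `𝓛₂`: on `L = ℂ³` with standard basis `(e₁,e₂,e₃)`,
`α = id`, `β` the upper unitriangular matrix with rows `(1,1,0), (0,1,1), (0,0,1)`
(so `β e₁ = e₁`, `β e₂ = e₁ + e₂`, `β e₃ = e₂ + e₃`), and the indicated bracket,
`(L, [·,·], α, β)` is a regular multiplicative BiHom-Lie algebra. -/
theorem family_L2_is_biHomLie
    (α β : (Fin 3 → ℂ) →ₗ[ℂ] (Fin 3 → ℂ))
    (br : (Fin 3 → ℂ) →ₗ[ℂ] (Fin 3 → ℂ) →ₗ[ℂ] (Fin 3 → ℂ))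
    (e : Fin 3 → (Fin 3 → ℂ)) (he : e = fun i => Pi.single i 1)
    (hα : α = LinearMap.id)
    (hβ0 : β (e 0) = e 0) (hβ1 : β (e 1) = e 0 + e 1) (hβ2 : β (e 2) = e 1 + e 2)
    (h00 : br (e 0) (e 0) = 0)
    (h01 : br (e 0) (e 1) = (2 : ℂ) • e 0)
    (h02 : br (e 0) (e 2) = e 0 + (2 : ℂ) • e 1)
    (h10 : br (e 1) (e 0) = (-2 : ℂ) • e 0)
    (h11 : br (e 1) (e 1) = (-2 : ℂ) • e 0)
    (h12 : br (e 1) (e 2) = e 0 + e 1 + (2 : ℂ) • e 2)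
    (h20 : br (e 2) (e 0) = e 0 - (2 : ℂ) • e 1)
    (h21 : br (e 2) (e 1) = (-3 : ℂ) • e 1 - (2 : ℂ) • e 2)
    (h22 : br (e 2) (e 2) = - e 0 - e 1 - (2 : ℂ) • e 2) :
    (∀ x : Fin 3 → ℂ, α (β x) = β (α x)) ∧
    (∀ x y : Fin 3 → ℂ, α (br x y) = br (α x) (α y)) ∧
    (∀ x y : Fin 3 → ℂ, β (br x y) = br (β x) (β y)) ∧
    (∀ x y : Fin 3 → ℂ, br (β x) (α y) = - br (β y) (α x)) ∧
    (∀ x y z : Fin 3 → ℂ,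
      br (β (β x)) (br (β y) (α z)) + br (β (β y)) (br (β z) (α x))
        + br (β (β z)) (br (β x) (α y)) = 0) ∧
    Function.Bijective α ∧ Function.Bijective β := by
  subst he hα
  obtain rfl := eq_beta hβ0 hβ1 hβ2
  obtain rfl := eq_bracket h00 h01 h02 h10 h11 h12 h20 h21 h22
  exact ⟨fun _ => rfl, fun _ _ => rfl, beta_bracket, bracket_beta_skew, bracket_biHom_jacobi,
    Function.bijective_id, beta_bijective⟩
end
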